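/- arXiv:2506.09508 — 7 statements merged into one kernel-verified Lean document; each statement's English description precedes it below -/
import Mathlib

section
/- Let f : R^d → R be a continuous convex function, V a positive definite d×d matrix, b > 0, and E = {θ : ‖θ − θ₀‖_V ≤ b} the corresponding ellipsoid, where ‖x‖_V = √(xᵀVx). If θ̃ ∼ N(θ₀, b²V⁻¹), then P[f(θ̃) ≥ max_{θ∈E} f(θ)] ≥ 1/(4√(eπ)). -/
/-!
Whitening by `A` turns the ellipsoid into the Euclidean ball of radius `b` and `θ̃` into
`θ₀ + b • A z`, so it suffices to treat a convex continuous `F` on the ball and the point `b • z`.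
Let `y⋆` maximise `F` on the ball. The open convex sublevel set `{F < F y⋆}` misses `y⋆`, so
Hahn–Banach gives `u` with `u ⬝ᵥ y < u ⬝ᵥ y⋆` on it; hence `F (b • z) ≥ F y⋆` as soon as
`u ⬝ᵥ z ≥ ‖u‖`, which by Cauchy–Schwarz dominates `u ⬝ᵥ y⋆ / b`. Since `u ⬝ᵥ z ∼ N(0, ‖u‖²)`,
this event has probability `P[N(0,1) ≥ 1]`, and bounding the standard density below on `[1, 2]`
by the exponential of its chord gives `P[N(0,1) ≥ 1] ≥ 1 / (4 √(e π))`.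
-/

open MeasureTheory ProbabilityTheory Matrix Set Real
open scoped NNReal ENNReal

section GaussianSum

variable {Ω ι : Type*} [MeasurableSpace Ω] {μ : Measure Ω} [IsProbabilityMeasure μ]

lemma map_finsetSum_eq_gaussianReal {X : ι → Ω → ℝ} (hindep : iIndepFun X μ) {m : ι → ℝ}
    {v : ι → ℝ≥0} (hlaw : ∀ i, μ.map (X i) = gaussianReal (m i) (v i)) (s : Finset ι) :
    μ.map (∑ i ∈ s, X i) = gaussianReal (∑ i ∈ s, m i) (∑ i ∈ s, v i) := by
  classical
  have hX (i : ι) : AEMeasurable (X i) μ :=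
    .of_map_ne_zero (by rw [hlaw i]; exact IsProbabilityMeasure.ne_zero _)
  induction s using Finset.induction_on with
  | empty => simp [gaussianReal_zero_var, show (0 : Ω → ℝ) = fun _ ↦ 0 from rfl]
  | insert j s hj ih =>
    rw [Finset.sum_insert hj, Finset.sum_insert hj, Finset.sum_insert hj, add_comm (X j),
      add_comm (m j), add_comm (v j)]
    exact gaussianReal_add_gaussianReal_of_indepFun
      (hindep.indepFun_finsetSum_of_notMem₀ hX hj) ih (hlaw j)

lemma map_dotProduct_eq_gaussianReal [Fintype ι] {z : Ω → ι → ℝ}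
    (hindep : iIndepFun (fun i ω ↦ z ω i) μ)
    (hlaw : ∀ i, μ.map (fun ω ↦ z ω i) = gaussianReal 0 1) (u : ι → ℝ) :
    μ.map (fun ω ↦ u ⬝ᵥ z ω) = gaussianReal 0 (u ⬝ᵥ u).toNNReal := by
  have hlaw' (i : ι) : μ.map (fun ω ↦ u i * z ω i) = gaussianReal 0 (u i ^ 2).toNNReal := by
    have hzi : HasLaw (fun ω ↦ z ω i) (gaussianReal 0 1) μ :=
      ⟨.of_map_ne_zero (by rw [hlaw i]; exact IsProbabilityMeasure.ne_zero _), hlaw i⟩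
    convert (gaussianReal_const_mul hzi (u i)).map_eq using 2
    · simp
    · ext; simp [sq_nonneg]
  convert map_finsetSum_eq_gaussianReal
    (hindep.comp (fun i x ↦ u i * x) fun i ↦ measurable_const_mul (u i)) hlaw' Finset.univ
    using 2
  · ext ω; simp [dotProduct]
  · simp
  · ext; simp [dotProduct, sq, Finset.sum_nonneg, mul_self_nonneg]

end GaussianSum

lemma gaussianReal_Ici_one_le_Ici_sqrt (v : ℝ≥0) :
    gaussianReal 0 1 (Ici 1) ≤ gaussianReal 0 v (Ici √v) := by
  rcases eq_or_ne v 0 with rfl | hv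
  · simpa [gaussianReal_zero_var] using prob_le_one
  have hs : 0 < √(v : ℝ) := Real.sqrt_pos.2 (by positivity)
  have hmap : (gaussianReal 0 1).map (√(v : ℝ) * ·) = gaussianReal 0 v := by
    rw [gaussianReal_map_const_mul]
    congr 1
    · simp
    · ext; simp
  rw [← hmap, Measure.map_apply (measurable_const_mul _) measurableSet_Ici]
  refine measure_mono fun x hx ↦ ?_
  simp only [mem_Ici, mem_preimage] at hx ⊢
  nlinarith

lemma integral_exp_neg_three_halves_mul_add_one :
    ∫ x in (1 : ℝ)..2, exp (-(3 / 2) * x + 1) = 2 / 3 * (exp (-1 / 2) - exp (-2)) := by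
  rw [intervalIntegral.integral_comp_mul_add exp (by norm_num), integral_exp, smul_eq_mul]
  ring_nf

lemma ofReal_le_gaussianReal_Ici_one :
    ENNReal.ofReal (1 / (4 * √(exp 1 * π))) ≤ gaussianReal 0 1 (Ici 1) := by
  rw [gaussianReal_apply_eq_integral 0 one_ne_zero]
  refine ENNReal.ofReal_le_ofReal ?_
  -- on `[1, 2]` the chord `x ^ 2 ≤ 3 x - 2` bounds the density below by an exponential
  have hchord : ∀ x ∈ Icc (1 : ℝ) 2,
      (√(2 * π))⁻¹ * exp (-(3 / 2) * x + 1) ≤ gaussianPDFReal 0 1 x := by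
    rintro x ⟨hx1, hx2⟩
    rw [gaussianPDFReal, NNReal.coe_one, mul_one, sub_zero]
    gcongr
    nlinarith
  have hexp : 5 / 2 ≤ exp (3 / 2) := by linarith [add_one_le_exp (3 / 2 : ℝ)]
  -- `√π` cancels, leaving `3 √2 ≤ 8 (1 - e^(-3/2))`
  have hnum : 1 / (4 * √(exp 1 * π)) ≤ (√(2 * π))⁻¹ * (2 / 3 * (exp (-1 / 2) - exp (-2))) := by
    have h2 : exp (-2) = exp (-1 / 2) * (exp (3 / 2))⁻¹ := by
      rw [← exp_neg, ← exp_add]; norm_num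
    have h3 : exp (-1 / 2) * √(exp 1) = 1 := by
      rw [← exp_half, ← exp_add]; norm_num
    rw [sqrt_mul (exp_pos 1).le, sqrt_mul (by norm_num), h2]
    have hsqrt2 := sqrt_two_lt_three_halves
    have hπ : 0 < √π := sqrt_pos.2 pi_pos
    have he : 0 < √(exp 1) := sqrt_pos.2 (exp_pos 1)
    field_simp
    nlinarith [h3, hsqrt2, hexp]
  calc 1 / (4 * √(exp 1 * π))
      ≤ (√(2 * π))⁻¹ * (2 / 3 * (exp (-1 / 2) - exp (-2))) := hnum
    _ = ∫ x in Icc (1 : ℝ) 2, (√(2 * π))⁻¹ * exp (-(3 / 2) * x + 1) := by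
      rw [integral_Icc_eq_integral_Ioc,
        ← intervalIntegral.integral_of_le (by norm_num : (1 : ℝ) ≤ 2),
        intervalIntegral.integral_const_mul, integral_exp_neg_three_halves_mul_add_one]
    _ ≤ ∫ x in Icc (1 : ℝ) 2, gaussianPDFReal 0 1 x :=
      setIntegral_mono_on (Continuous.integrableOn_Icc (by fun_prop))
        (integrable_gaussianPDFReal 0 1).integrableOn measurableSet_Icc hchord
    _ ≤ ∫ x in Ici (1 : ℝ), gaussianPDFReal 0 1 x :=
      setIntegral_mono_set (integrable_gaussianPDFReal 0 1).integrableOn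
        (ae_of_all _ (gaussianPDFReal_nonneg 0 1)) (Icc_subset_Ici_self.eventuallyLE)

lemma ConvexOn.exists_strongDual_le_imp_le {E : Type*} [TopologicalSpace E] [AddCommGroup E]
    [Module ℝ E] [IsTopologicalAddGroup E] [ContinuousSMul ℝ E] {f : E → ℝ}
    (hconv : ConvexOn ℝ univ f) (hcont : Continuous f) (x : E) :
    ∃ g : StrongDual ℝ E, ∀ y, g x ≤ g y → f x ≤ f y := by
  have hs : Convex ℝ {y | f y < f x} := by simpa using hconv.convex_lt (f x)
  obtain ⟨g, hg⟩ :=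
    geometric_hahn_banach_open_point hs (isOpen_lt hcont continuous_const) (x := x) (by simp)
  exact ⟨g, fun y hy ↦ not_lt.1 fun hlt ↦ (hg y hlt).not_ge hy⟩

section DotProduct

variable {ι : Type*} [Fintype ι]

lemma sqrt_dotProduct_self_eq_norm (y : ι → ℝ) : √(y ⬝ᵥ y) = ‖WithLp.toLp 2 y‖ := by
  simp [EuclideanSpace.norm_eq, dotProduct, sq]

lemma dotProduct_le_sqrt_mul_sqrt (x y : ι → ℝ) : x ⬝ᵥ y ≤ √(x ⬝ᵥ x) * √(y ⬝ᵥ y) := by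
  simpa [dotProduct, sq] using Real.sum_mul_le_sqrt_mul_sqrt Finset.univ x y

lemma isCompact_setOf_sqrt_dotProduct_self_le (b : ℝ) :
    IsCompact {y : ι → ℝ | √(y ⬝ᵥ y) ≤ b} := by
  have : {y : ι → ℝ | √(y ⬝ᵥ y) ≤ b}
      = WithLp.ofLp '' Metric.closedBall (0 : EuclideanSpace ℝ ι) b := by
    ext y
    simp only [mem_ofPred_eq, sqrt_dotProduct_self_eq_norm, mem_image, mem_closedBall_zero_iff]
    exact ⟨fun h ↦ ⟨_, h, rfl⟩, by rintro ⟨x, hx, rfl⟩; exact hx⟩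
  rw [this]
  exact (isCompact_closedBall _ _).image (PiLp.continuous_ofLp 2 _)

lemma StrongDual.exists_dotProduct (g : StrongDual ℝ (ι → ℝ)) :
    ∃ u : ι → ℝ, ∀ y, g y = u ⬝ᵥ y := by
  classical
  exact ⟨fun i ↦ g fun j ↦ if i = j then 1 else 0, fun y ↦
    (g.toLinearMap.pi_apply_eq_sum_univ y).trans (by simp [dotProduct, mul_comm])⟩

theorem ofReal_le_measure_forall_le_apply_smul {Ω : Type*} [MeasurableSpace Ω] {μ : Measure Ω}
    [IsProbabilityMeasure μ] {F : (ι → ℝ) → ℝ} (hcont : Continuous F)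
    (hconv : ConvexOn ℝ univ F) {b : ℝ} (hb : 0 ≤ b) {z : Ω → ι → ℝ}
    (hindep : iIndepFun (fun i ω ↦ z ω i) μ)
    (hlaw : ∀ i, μ.map (fun ω ↦ z ω i) = gaussianReal 0 1) :
    ENNReal.ofReal (1 / (4 * √(exp 1 * π)))
      ≤ μ {ω | ∀ y, √(y ⬝ᵥ y) ≤ b → F y ≤ F (b • z ω)} := by
  obtain ⟨ys, hys, hmax⟩ := (isCompact_setOf_sqrt_dotProduct_self_le b).exists_isMaxOn
    ⟨0, by simpa using hb⟩ hcont.continuousOn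
  obtain ⟨g, hg⟩ := hconv.exists_strongDual_le_imp_le hcont ys
  obtain ⟨u, hu⟩ := g.exists_dotProduct
  have hsub : {ω | √(u ⬝ᵥ u) ≤ u ⬝ᵥ z ω}
      ⊆ {ω | ∀ y, √(y ⬝ᵥ y) ≤ b → F y ≤ F (b • z ω)} := by
    intro ω hω y hy
    refine (hmax hy).trans (hg _ ?_)
    rw [hu, hu, dotProduct_smul, smul_eq_mul]
    calc u ⬝ᵥ ys ≤ √(u ⬝ᵥ u) * √(ys ⬝ᵥ ys) := dotProduct_le_sqrt_mul_sqrt u ys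
      _ ≤ √(u ⬝ᵥ u) * b := by gcongr; exact hys
      _ ≤ b * (u ⬝ᵥ z ω) := by rw [mul_comm]; gcongr; exact hω
  have hlawu := map_dotProduct_eq_gaussianReal hindep hlaw u
  have hmeas : AEMeasurable (fun ω ↦ u ⬝ᵥ z ω) μ :=
    .of_map_ne_zero (by rw [hlawu]; exact IsProbabilityMeasure.ne_zero _)
  calc ENNReal.ofReal (1 / (4 * √(exp 1 * π)))
      ≤ gaussianReal 0 1 (Ici 1) := ofReal_le_gaussianReal_Ici_one
    _ ≤ gaussianReal 0 (u ⬝ᵥ u).toNNReal (Ici √(u ⬝ᵥ u).toNNReal) :=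
      gaussianReal_Ici_one_le_Ici_sqrt _
    _ = μ {ω | √(u ⬝ᵥ u) ≤ u ⬝ᵥ z ω} := by
      rw [← hlawu, Measure.map_apply_of_aemeasurable hmeas measurableSet_Ici,
        Real.coe_toNNReal _ (by simpa using dotProduct_star_self_nonneg u)]
      rfl
    _ ≤ _ := measure_mono hsub

end DotProduct

lemma Matrix.exists_mulVec_eq_and_dotProduct_mulVec_eq {R n : Type*} [CommRing R] [Fintype n]
    [DecidableEq n] {V A : Matrix n n R} (hV : IsUnit V) (hA : A * Aᵀ = V⁻¹) (x : n → R) :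
    ∃ y, A *ᵥ y = x ∧ x ⬝ᵥ V *ᵥ x = y ⬝ᵥ y := by
  have hAAt : IsUnit (A * Aᵀ) := hA ▸ (isUnit_nonsing_inv_iff.2 hV)
  have hAdet : IsUnit A.det := by
    rw [isUnit_iff_isUnit_det, det_mul, det_transpose] at hAAt
    exact isUnit_of_mul_isUnit_left hAAt
  refine ⟨A⁻¹ *ᵥ x, by rw [mulVec_mulVec, mul_nonsing_inv A hAdet, one_mulVec], ?_⟩
  have hVeq : V = (A⁻¹)ᵀ * A⁻¹ := by
    rw [← nonsing_inv_nonsing_inv V ((isUnit_iff_isUnit_det V).1 hV), ← hA, mul_inv_rev,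
      transpose_nonsing_inv]
  rw [hVeq, ← mulVec_mulVec, dotProduct_mulVec, vecMul_transpose]

theorem randomized_optimism_general
    {d : ℕ} {Ω : Type*} [MeasurableSpace Ω] (μ : Measure Ω) [IsProbabilityMeasure μ]
    (f : (Fin d → ℝ) → ℝ) (hfcont : Continuous f) (hfconv : ConvexOn ℝ Set.univ f)
    (V A : Matrix (Fin d) (Fin d) ℝ) (hV : V.PosDef) (hA : A * A.transpose = V⁻¹)
    (θ₀ : Fin d → ℝ) {b : ℝ} (hb : 0 < b)
    (z : Ω → Fin d → ℝ)
    (hindep : iIndepFun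
      (fun i ω => z ω i) μ)
    (hlaw : ∀ i : Fin d, Measure.map (fun ω => z ω i) μ = gaussianReal 0 1) :
    ENNReal.ofReal (1 / (4 * Real.sqrt (Real.exp 1 * Real.pi)))
      ≤ μ {ω | ∀ θ : Fin d → ℝ, Real.sqrt ((θ - θ₀) ⬝ᵥ V.mulVec (θ - θ₀)) ≤ b →
            f θ ≤ f (θ₀ + b • A.mulVec (z ω))} := by
  have hwhite := ofReal_le_measure_forall_le_apply_smul (F := fun y ↦ f (θ₀ + A *ᵥ y))
    (by fun_prop) ((hfconv.translate_right θ₀).comp_linearMap A.mulVecLin) hb.le hindep hlaw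
  refine hwhite.trans (measure_mono fun ω hω θ hθ ↦ ?_)
  obtain ⟨y, hAy, hVy⟩ := exists_mulVec_eq_and_dotProduct_mulVec_eq hV.isUnit hA (θ - θ₀)
  simpa [hAy, mulVec_smul] using hω y (hVy ▸ hθ)

/-- **Optimism with constant probability (Lemma for randomized exploration).**
Let `f : ℝ^d → ℝ` be continuous and convex, `V` positive definite, `b > 0`, and
`E = {θ : ‖θ - θ₀‖_V ≤ b}`.  If `θ̃ ∼ N(θ₀, b² V⁻¹)` — realized as
`θ̃ = θ₀ + b • A z` where `A Aᵀ = V⁻¹` and `z` is a standard Gaussian vector — then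
`P[f(θ̃) ≥ max_{θ ∈ E} f(θ)] ≥ 1/(4√(eπ))`. -/
theorem randomized_optimism
    {d : ℕ} {Ω : Type*} [MeasurableSpace Ω] (μ : Measure Ω) [IsProbabilityMeasure μ]
    (f : (Fin d → ℝ) → ℝ) (hfcont : Continuous f) (hfconv : ConvexOn ℝ Set.univ f)
    (V A : Matrix (Fin d) (Fin d) ℝ) (hV : V.PosDef) (hA : A * A.transpose = V⁻¹)
    (θ₀ : Fin d → ℝ) {b : ℝ} (hb : 0 < b)
    (z : Ω → Fin d → ℝ) (hzmeas : Measurable z)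
    (hindep : iIndepFun
      (fun i ω => z ω i) μ)
    (hlaw : ∀ i : Fin d, Measure.map (fun ω => z ω i) μ = gaussianReal 0 1) :
    ENNReal.ofReal (1 / (4 * Real.sqrt (Real.exp 1 * Real.pi)))
      ≤ μ {ω | ∀ θ : Fin d → ℝ, Real.sqrt ((θ - θ₀) ⬝ᵥ V.mulVec (θ - θ₀)) ≤ b →
            f θ ≤ f (θ₀ + b • A.mulVec (z ω))} :=
  randomized_optimism_general μ f hfcont hfconv V A hV hA θ₀ hb z hindep hlaw
end

section
/- For a convex function g : R^d → R with maximizer z̄ of g over the closed unit ball satisfying ‖z̄‖ = 1, if z ∈ R^d satisfies ⟨z̄, z⟩ ≥ 1, then g(z) ≥ g(z̄). -/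
open scoped RealInnerProductSpace Topology
open Set Filter

/-! If `x` maximizes the convex function `f` on the ball of radius `‖x‖` and `z` lies strictly on
the far side of the tangent hyperplane at `x`, then stepping back from `x` away from `z` by a small
amount stays inside the ball, so `x` lies on an open segment from a point of the ball to `z`;
convexity along that segment forces `f x ≤ f z`. The case of `z` on the tangent hyperplane follows
by continuity of `f`. -/

theorem self_mem_openSegment_sub_smul_add {E : Type*} [AddCommGroup E] [Module ℝ E]
    (x v : E) {t : ℝ} (ht : 0 < t) : x ∈ openSegment ℝ (x - t • v) (x + v) := by
  refine mem_openSegment_iff_div.mpr ⟨1, t, one_pos, ht, ?_⟩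
  have h1t : (1 : ℝ) + t ≠ 0 := by positivity
  match_scalars <;> field_simp
  ring

section InnerProductSpace

variable {E : Type*} [NormedAddCommGroup E] [InnerProductSpace ℝ E]

theorem exists_pos_norm_sub_smul_le {x v : E} (h : 0 < ⟪x, v⟫) :
    ∃ t : ℝ, 0 < t ∧ ‖x - t • v‖ ≤ ‖x‖ := by
  have hv : 0 < ‖v‖ ^ 2 := by
    have : v ≠ 0 := by rintro rfl; simp at h
    positivity
  refine ⟨⟪x, v⟫ / ‖v‖ ^ 2, by positivity, ?_⟩
  -- with `t = ⟪x, v⟫ / ‖v‖²` the quadratic `‖x - t • v‖²` drops by exactly `t ⟪x, v⟫`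
  have hsq : ‖x - (⟪x, v⟫ / ‖v‖ ^ 2) • v‖ ^ 2 = ‖x‖ ^ 2 - ⟪x, v⟫ ^ 2 / ‖v‖ ^ 2 := by
    rw [norm_sub_sq_real, real_inner_smul_right, norm_smul, mul_pow, Real.norm_eq_abs, sq_abs]
    field_simp
    ring
  rw [← sq_le_sq₀ (norm_nonneg _) (norm_nonneg _), hsq]
  linarith [div_nonneg (sq_nonneg ⟪x, v⟫) hv.le]

theorem ConvexOn.le_of_inner_sub_pos {f : E → ℝ} (hf : ConvexOn ℝ univ f) {x z : E}
    (hmax : ∀ w, ‖w‖ ≤ ‖x‖ → f w ≤ f x) (h : 0 < ⟪x, z - x⟫) : f x ≤ f z := by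
  obtain ⟨t, ht, hnorm⟩ := exists_pos_norm_sub_smul_le h
  have hseg := self_mem_openSegment_sub_smul_add x (z - x) ht
  rw [add_sub_cancel] at hseg
  exact hf.le_right_of_left_le trivial trivial hseg (hmax _ hnorm)

theorem ConvexOn.le_of_inner_sub_nonneg [FiniteDimensional ℝ E] {f : E → ℝ}
    (hf : ConvexOn ℝ univ f) {x z : E} (hx : x ≠ 0) (hmax : ∀ w, ‖w‖ ≤ ‖x‖ → f w ≤ f x)
    (h : 0 ≤ ⟪x, z - x⟫) : f x ≤ f z := by
  have hcont : Continuous f := continuousOn_univ.mp (hf.continuousOn isOpen_univ)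
  have hlim : Tendsto (fun ε : ℝ => z + ε • x) (𝓝[>] 0) (𝓝 z) := by
    have : Continuous fun ε : ℝ => z + ε • x := by fun_prop
    simpa using (this.tendsto 0).mono_left nhdsWithin_le_nhds
  refine ge_of_tendsto ((hcont.tendsto z).comp hlim) ?_
  filter_upwards [self_mem_nhdsWithin] with ε (hε : 0 < ε)
  refine hf.le_of_inner_sub_pos hmax ?_
  rw [add_sub_right_comm, inner_add_right, real_inner_smul_right, real_inner_self_eq_norm_sq]
  positivity

end InnerProductSpace

/-- If `g : ℝ^d → ℝ` is convex (finite everywhere), `z̄` maximizes `g` over the closed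
unit ball with `‖z̄‖ = 1`, and `⟨z̄, z⟩ ≥ 1`, then `g(z) ≥ g(z̄)`. -/
theorem convex_max_of_inner_ge_one
    {d : ℕ} (g : EuclideanSpace ℝ (Fin d) → ℝ)
    (hg : ConvexOn ℝ Set.univ g)
    (zbar : EuclideanSpace ℝ (Fin d)) (hzbar : ‖zbar‖ = 1)
    (hmax : ∀ w : EuclideanSpace ℝ (Fin d), ‖w‖ ≤ 1 → g w ≤ g zbar)
    (z : EuclideanSpace ℝ (Fin d)) (hz : 1 ≤ ⟪zbar, z⟫) :
    g zbar ≤ g z := by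
  refine hg.le_of_inner_sub_nonneg (norm_ne_zero_iff.mp (by simp [hzbar]))
    (fun w hw => hmax w (hzbar ▸ hw)) ?_
  rw [inner_sub_right, real_inner_self_eq_norm_sq, hzbar]
  linarith
end

section
/- Let A, B, C be positive semi-definite d×d matrices with A = B + C and B positive definite. Then for all nonzero x ∈ R^d, (xᵀAx)/(xᵀBx) ≤ det(A)/det(B). -/
open Matrix
open scoped MatrixOrder

/-! Writing `B = SᵀS` and `C = SᵀMS` with `M` positive semidefinite reduces the claim to `B = 1`.
There, with `y = Sx`, `yᵀ(1 + M)y ≤ (1 + tr M) yᵀy ≤ det (1 + M) yᵀy`: the first step is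
Cauchy–Schwarz for `M = NᵀN`, the second is `∏ (1 + λᵢ) ≥ 1 + ∑ λᵢ` for the eigenvalues
`λᵢ ≥ 0` of `M`. -/

theorem Finset.one_add_sum_le_prod_one_add {ι R : Type*} [CommSemiring R] [PartialOrder R]
    [IsOrderedRing R] (s : Finset ι) {a : ι → R} (ha : ∀ i ∈ s, 0 ≤ a i) :
    1 + ∑ i ∈ s, a i ≤ ∏ i ∈ s, (1 + a i) := by
  classical
  induction s using Finset.induction with
  | empty => simp
  | insert j t hj ih =>
    have haj : 0 ≤ a j := ha j (mem_insert_self j t)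
    have ht : ∀ i ∈ t, 0 ≤ a i := fun i hi ↦ ha i (mem_insert_of_mem hi)
    rw [sum_insert hj, prod_insert hj]
    calc 1 + (a j + ∑ i ∈ t, a i) ≤ 1 + (a j + ∑ i ∈ t, a i) + a j * ∑ i ∈ t, a i :=
          le_add_of_nonneg_right (mul_nonneg haj (sum_nonneg ht))
      _ = (1 + a j) * (1 + ∑ i ∈ t, a i) := by ring
      _ ≤ (1 + a j) * ∏ i ∈ t, (1 + a i) := by gcongr; exacts [add_nonneg zero_le_one haj, ih ht]

namespace Matrix

variable {n : Type*} [Fintype n]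

theorem dotProduct_transpose_mul_mul_mulVec {R : Type*} [CommSemiring R] (S X : Matrix n n R)
    (x : n → R) : x ⬝ᵥ (Sᵀ * X * S) *ᵥ x = (S *ᵥ x) ⬝ᵥ X *ᵥ (S *ᵥ x) := by
  simp [← mulVec_mulVec, dotProduct_mulVec, vecMul_transpose]

theorem mulVec_dotProduct_mulVec_le_trace_mul_transpose {m : Type*} [Fintype m]
    (N : Matrix m n ℝ) (y : n → ℝ) : N *ᵥ y ⬝ᵥ N *ᵥ y ≤ (N * Nᵀ).trace * (y ⬝ᵥ y) := by
  simp only [dotProduct, trace, diag, mul_apply, transpose_apply, mulVec]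
  rw [Finset.sum_mul]
  refine Finset.sum_le_sum fun i _ ↦ ?_
  simpa only [sq] using Finset.sum_mul_sq_le_sq_mul_sq Finset.univ (N i) y

variable [DecidableEq n]

theorem det_transpose_mul_mul {R : Type*} [CommRing R] (S X : Matrix n n R) :
    (Sᵀ * X * S).det = (Sᵀ * S).det * X.det := by
  simp only [det_mul]; ring

theorem IsHermitian.det_one_add {M : Matrix n n ℝ} (hM : M.IsHermitian) :
    (1 + M).det = ∏ i, (1 + hM.eigenvalues i) := by
  set U := hM.eigenvectorUnitary
  have hUU : star (U : Matrix n n ℝ) * U = 1 := Unitary.star_mul_self_of_mem U.2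
  have h : 1 + M =
      Unitary.conjStarAlgAut ℝ _ U (1 + diagonal (RCLike.ofReal ∘ hM.eigenvalues)) := by
    rw [map_add, map_one, ← hM.spectral_theorem]
  rw [h, Unitary.conjStarAlgAut_apply, det_mul, det_mul, mul_comm, ← mul_assoc, ← det_mul, hUU,
    det_one, one_mul, ← diagonal_one, diagonal_add, det_diagonal]
  rfl

theorem PosSemidef.one_add_trace_le_det_one_add {M : Matrix n n ℝ} (hM : M.PosSemidef) :
    1 + M.trace ≤ (1 + M).det := by
  rw [hM.isHermitian.det_one_add, hM.isHermitian.trace_eq_sum_eigenvalues]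
  exact Finset.univ.one_add_sum_le_prod_one_add fun i _ ↦ hM.eigenvalues_nonneg i

theorem PosSemidef.dotProduct_mulVec_le_trace_mul {M : Matrix n n ℝ} (hM : M.PosSemidef)
    (y : n → ℝ) : y ⬝ᵥ M *ᵥ y ≤ M.trace * (y ⬝ᵥ y) := by
  obtain ⟨N, rfl⟩ := CStarAlgebra.nonneg_iff_eq_star_mul_self.mp hM.nonneg
  rw [star_eq_conjTranspose, conjTranspose_eq_transpose_of_trivial, trace_mul_comm,
    ← mulVec_mulVec, dotProduct_mulVec, vecMul_transpose]
  exact mulVec_dotProduct_mulVec_le_trace_mul_transpose N y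

theorem PosSemidef.dotProduct_one_add_mulVec_le_det_mul {M : Matrix n n ℝ} (hM : M.PosSemidef)
    (y : n → ℝ) : y ⬝ᵥ (1 + M) *ᵥ y ≤ (1 + M).det * (y ⬝ᵥ y) := by
  have hyy : 0 ≤ y ⬝ᵥ y := by simpa using dotProduct_star_self_nonneg y
  calc y ⬝ᵥ (1 + M) *ᵥ y = y ⬝ᵥ y + y ⬝ᵥ M *ᵥ y := by
        rw [add_mulVec, one_mulVec, dotProduct_add]
    _ ≤ (1 + M.trace) * (y ⬝ᵥ y) := by linarith [hM.dotProduct_mulVec_le_trace_mul y]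
    _ ≤ (1 + M).det * (y ⬝ᵥ y) := by gcongr; exact hM.one_add_trace_le_det_one_add

theorem PosDef.exists_transpose_mul_self_eq_and_transpose_mul_mul_eq {B C : Matrix n n ℝ}
    (hB : B.PosDef) (hC : C.PosSemidef) :
    ∃ S M : Matrix n n ℝ, M.PosSemidef ∧ B = Sᵀ * S ∧ C = Sᵀ * M * S := by
  obtain ⟨S, rfl⟩ := CStarAlgebra.nonneg_iff_eq_star_mul_self.mp hB.posSemidef.nonneg
  have hS : S⁻¹ * S = 1 :=
    nonsing_inv_mul S ((isUnit_iff_isUnit_det S).mp (isUnit_of_mul_isUnit_right hB.isUnit))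
  rw [star_eq_conjTranspose, conjTranspose_eq_transpose_of_trivial]
  refine ⟨S, S⁻¹ᵀ * C * S⁻¹, ?_, rfl, ?_⟩
  · simpa [conjTranspose_eq_transpose_of_trivial] using hC.conjTranspose_mul_mul_same S⁻¹
  · calc C = (S⁻¹ * S)ᵀ * C * (S⁻¹ * S) := by rw [hS, transpose_one, one_mul, mul_one]
      _ = Sᵀ * (S⁻¹ᵀ * C * S⁻¹) * S := by simp only [transpose_mul, Matrix.mul_assoc]

theorem PosDef.dotProduct_add_mulVec_mul_det_le {B C : Matrix n n ℝ} (hB : B.PosDef)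
    (hC : C.PosSemidef) (x : n → ℝ) :
    x ⬝ᵥ (B + C) *ᵥ x * B.det ≤ (B + C).det * (x ⬝ᵥ B *ᵥ x) := by
  obtain ⟨S, M, hM, rfl, rfl⟩ := hB.exists_transpose_mul_self_eq_and_transpose_mul_mul_eq hC
  have hBC : Sᵀ * S + Sᵀ * M * S = Sᵀ * (1 + M) * S := by rw [mul_add, add_mul, mul_one]
  have hB_quad : x ⬝ᵥ (Sᵀ * S) *ᵥ x = S *ᵥ x ⬝ᵥ S *ᵥ x := by
    simpa using dotProduct_transpose_mul_mul_mulVec S 1 x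
  have hy := mul_le_mul_of_nonneg_left (hM.dotProduct_one_add_mulVec_le_det_mul (S *ᵥ x))
    hB.posSemidef.det_nonneg
  rw [hBC, det_transpose_mul_mul, dotProduct_transpose_mul_mul_mulVec, hB_quad]
  linarith

end Matrix

theorem quadform_ratio_le_det_ratio_general
    {d : ℕ} (A B C : Matrix (Fin d) (Fin d) ℝ)
    (hB : B.PosDef) (hC : C.PosSemidef)
    (hABC : A = B + C) (x : Fin d → ℝ) (hx : x ≠ 0) :
    (x ⬝ᵥ A.mulVec x) / (x ⬝ᵥ B.mulVec x) ≤ A.det / B.det := by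
  subst hABC
  rw [div_le_div_iff₀ (by simpa using hB.re_dotProduct_pos hx) hB.det_pos]
  exact hB.dotProduct_add_mulVec_mul_det_le hC x

/-- **Ratio of quadratic forms bounded by ratio of determinants** (Lemma 12 of
Abbasi-Yadkori et al., 2011). If `A = B + C` with `A, C` positive semi-definite and
`B` positive definite, then for all `x ≠ 0`, `(xᵀAx)/(xᵀBx) ≤ det A / det B`. -/
theorem quadform_ratio_le_det_ratio
    {d : ℕ} (A B C : Matrix (Fin d) (Fin d) ℝ)
    (hA : A.PosSemidef) (hB : B.PosDef) (hC : C.PosSemidef)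
    (hABC : A = B + C) (x : Fin d → ℝ) (hx : x ≠ 0) :
    (x ⬝ᵥ A.mulVec x) / (x ⬝ᵥ B.mulVec x) ≤ A.det / B.det :=
  quadform_ratio_le_det_ratio_general A B C hB hC hABC x hx
end

section
/- Let (x_t)_{t≥1} be vectors in R^d with ‖x_t‖ ≤ L for all t, and for λ > 0 define V_t = λI + Σ_{k=1}^{t−1} x_k x_kᵀ. Then Σ_{t=1}^T min{1, ‖x_t‖²_{V_t⁻¹}} ≤ 2d log(1 + TL²/(dλ)). -/
/-!
The matrix determinant lemma gives `det V_{t+1} = det V_t · (1 + ‖x_t‖²_{V_t⁻¹})`, so the sum of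
`log (1 + ‖x_t‖²_{V_t⁻¹})` telescopes to `log (det V_T / λ^d)`, and `min 1 u ≤ 2 log (1 + u)`.
AM-GM on the eigenvalues bounds `det V_T` by `(tr V_T / d)^d ≤ (λ + T L² / d)^d`.
-/

open Matrix Finset

/-- The design matrix `V_t = λ I + ∑_{k < t} x_k x_kᵀ`. -/
noncomputable def designMatrix {d : ℕ} (lam : ℝ) (x : ℕ → Fin d → ℝ) (t : ℕ) :
    Matrix (Fin d) (Fin d) ℝ :=
  lam • (1 : Matrix (Fin d) (Fin d) ℝ) + ∑ k ∈ Finset.range t, vecMulVec (x k) (x k)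

theorem Matrix.det_add_vecMulVec {n R : Type*} [Fintype n] [DecidableEq n] [CommRing R]
    {A : Matrix n n R} (hA : IsUnit A.det) (u v : n → R) :
    (A + vecMulVec u v).det = A.det * (1 + v ⬝ᵥ A⁻¹ *ᵥ u) := by
  rw [vecMulVec_eq Unit, det_add_replicateCol_mul_replicateRow hA, det_unique (n := Unit),
    Matrix.mul_assoc, ← replicateCol_mulVec]
  rfl

theorem Real.min_one_le_two_mul_log_one_add {u : ℝ} (hu : 0 ≤ u) :
    min 1 u ≤ 2 * Real.log (1 + u) := by
  have hu1 : 0 < 1 + u := by linarith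
  have hmin : min 1 u * (1 + u) ≤ 2 * u := by
    rcases le_total u 1 with h | h
    · rw [min_eq_right h]; nlinarith
    · rw [min_eq_left h]; linarith
  calc min 1 u ≤ 2 * u / (1 + u) := (le_div_iff₀ hu1).mpr hmin
    _ = 2 * (1 - (1 + u)⁻¹) := by field_simp; ring
    _ ≤ 2 * Real.log (1 + u) := by gcongr; exact Real.one_sub_inv_le_log_of_pos hu1

theorem Real.prod_le_mean_pow_card {ι : Type*} (s : Finset ι) (z : ι → ℝ)
    (hz : ∀ i ∈ s, 0 ≤ z i) : ∏ i ∈ s, z i ≤ ((∑ i ∈ s, z i) / #s) ^ #s := by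
  rcases s.eq_empty_or_nonempty with rfl | hs
  · simp
  have hcard : (0 : ℝ) < #s := by exact_mod_cast hs.card_pos
  have amgm := Real.geom_mean_le_arith_mean_weighted s (fun _ ↦ (#s : ℝ)⁻¹) z
    (fun _ _ ↦ by positivity) (by simp [hcard.ne']) hz
  rw [← Finset.mul_sum, inv_mul_eq_div] at amgm
  calc ∏ i ∈ s, z i = (∏ i ∈ s, z i ^ (#s : ℝ)⁻¹) ^ #s := by
        rw [← Finset.prod_pow]
        refine Finset.prod_congr rfl fun i hi ↦ ?_
        rw [← Real.rpow_natCast, ← Real.rpow_mul (hz i hi), inv_mul_cancel₀ hcard.ne',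
          Real.rpow_one]
    _ ≤ ((∑ i ∈ s, z i) / #s) ^ #s := by
        gcongr
        exact Finset.prod_nonneg fun i hi ↦ Real.rpow_nonneg (hz i hi) _

theorem Matrix.PosSemidef.det_le_trace_div_card_pow {n : Type*} [Fintype n] [DecidableEq n]
    {A : Matrix n n ℝ} (hA : A.PosSemidef) :
    A.det ≤ (A.trace / Fintype.card n) ^ Fintype.card n := by
  rw [hA.isHermitian.det_eq_prod_eigenvalues, hA.isHermitian.trace_eq_sum_eigenvalues]
  simpa using Real.prod_le_mean_pow_card univ _ fun i _ ↦ hA.eigenvalues_nonneg i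

section designMatrix

variable {d : ℕ} (lam : ℝ) (x : ℕ → Fin d → ℝ)

theorem designMatrix_zero : designMatrix lam x 0 = lam • 1 := by
  simp [designMatrix]

theorem designMatrix_succ (t : ℕ) :
    designMatrix lam x (t + 1) = designMatrix lam x t + vecMulVec (x t) (x t) := by
  rw [designMatrix, designMatrix, sum_range_succ, add_assoc]

theorem trace_designMatrix (t : ℕ) :
    (designMatrix lam x t).trace = d * lam + ∑ k ∈ range t, x k ⬝ᵥ x k := by
  simp [designMatrix, trace_sum, trace_vecMulVec, mul_comm]

variable {lam}

theorem designMatrix_posDef (hlam : 0 < lam) (t : ℕ) : (designMatrix lam x t).PosDef := by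
  induction t with
  | zero => simpa [designMatrix_zero, smul_one_eq_diagonal] using fun _ ↦ hlam
  | succ t ih =>
    rw [designMatrix_succ]
    exact ih.add_posSemidef (by simpa using posSemidef_vecMulVec_self_star (x t))

theorem det_designMatrix_succ (hlam : 0 < lam) (t : ℕ) :
    (designMatrix lam x (t + 1)).det
      = (designMatrix lam x t).det * (1 + x t ⬝ᵥ (designMatrix lam x t)⁻¹ *ᵥ x t) := by
  rw [designMatrix_succ]
  exact det_add_vecMulVec (designMatrix_posDef x hlam t).det_pos.ne'.isUnit _ _

theorem dotProduct_inv_designMatrix_mulVec_nonneg (hlam : 0 < lam) (t : ℕ) :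
    0 ≤ x t ⬝ᵥ (designMatrix lam x t)⁻¹ *ᵥ x t := by
  simpa using (designMatrix_posDef x hlam t).inv.posSemidef.dotProduct_mulVec_nonneg (x t)

theorem log_det_designMatrix (hlam : 0 < lam) (T : ℕ) :
    Real.log (designMatrix lam x T).det
      = d * Real.log lam
        + ∑ t ∈ range T, Real.log (1 + x t ⬝ᵥ (designMatrix lam x t)⁻¹ *ᵥ x t) := by
  induction T with
  | zero => simp [designMatrix_zero, Real.log_pow]
  | succ T ih =>
    have hquad := dotProduct_inv_designMatrix_mulVec_nonneg x hlam T
    rw [det_designMatrix_succ x hlam, Real.log_mul (designMatrix_posDef x hlam T).det_pos.ne'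
      (by positivity), ih, sum_range_succ, add_assoc]

theorem log_det_designMatrix_le (hd : 0 < d) (hlam : 0 < lam) {L : ℝ}
    (hx : ∀ t, x t ⬝ᵥ x t ≤ L ^ 2) (T : ℕ) :
    Real.log (designMatrix lam x T).det ≤ d * Real.log (lam + T * L ^ 2 / d) := by
  have hV := designMatrix_posDef x hlam T
  have hd' : (0 : ℝ) < d := by exact_mod_cast hd
  have htrace : (designMatrix lam x T).trace / d ≤ lam + T * L ^ 2 / d := by
    rw [trace_designMatrix, add_div, mul_div_cancel_left₀ _ hd'.ne']
    gcongr
    simpa using sum_le_sum fun t (_ : t ∈ range T) ↦ hx t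
  have hdet : (designMatrix lam x T).det ≤ (lam + T * L ^ 2 / d) ^ d :=
    calc (designMatrix lam x T).det ≤ ((designMatrix lam x T).trace / d) ^ d := by
          simpa using hV.posSemidef.det_le_trace_div_card_pow
      _ ≤ (lam + T * L ^ 2 / d) ^ d :=
          pow_le_pow_left₀ (div_nonneg hV.posSemidef.trace_nonneg hd'.le) htrace d
  calc Real.log (designMatrix lam x T).det ≤ Real.log ((lam + T * L ^ 2 / d) ^ d) :=
        Real.log_le_log hV.det_pos hdet
    _ = d * Real.log (lam + T * L ^ 2 / d) := Real.log_pow _ _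

end designMatrix

theorem elliptical_potential_general
    {d : ℕ} (hd : 0 < d) {lam L : ℝ} (hlam : 0 < lam)
    (x : ℕ → Fin d → ℝ) (hx : ∀ t, Real.sqrt (x t ⬝ᵥ x t) ≤ L) (T : ℕ) :
    ∑ t ∈ Finset.range T,
        min 1 (x t ⬝ᵥ (designMatrix lam x t)⁻¹.mulVec (x t))
      ≤ 2 * d * Real.log (1 + T * L ^ 2 / (d * lam)) := by
  have hx' (t : ℕ) : x t ⬝ᵥ x t ≤ L ^ 2 := (Real.sqrt_le_iff.mp (hx t)).2
  calc ∑ t ∈ range T, min 1 (x t ⬝ᵥ (designMatrix lam x t)⁻¹ *ᵥ x t)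
      ≤ ∑ t ∈ range T, 2 * Real.log (1 + x t ⬝ᵥ (designMatrix lam x t)⁻¹ *ᵥ x t) :=
        sum_le_sum fun t _ ↦ Real.min_one_le_two_mul_log_one_add
          (dotProduct_inv_designMatrix_mulVec_nonneg x hlam t)
    _ = 2 * (Real.log (designMatrix lam x T).det - d * Real.log lam) := by
        rw [log_det_designMatrix x hlam, ← mul_sum]; ring
    _ ≤ 2 * (d * Real.log (lam + T * L ^ 2 / d) - d * Real.log lam) := by
        gcongr
        exact log_det_designMatrix_le x hd hlam hx' T
    _ = 2 * d * Real.log (1 + T * L ^ 2 / (d * lam)) := by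
        have hd' : (0 : ℝ) < d := by exact_mod_cast hd
        rw [mul_assoc, ← mul_sub, ← Real.log_div (by positivity) hlam.ne']
        congr 3
        field_simp

/-- **Elliptical potential lemma** (Lemma 19.4 of Lattimore & Szepesvári).
If `‖x_t‖ ≤ L` and `V_t = λI + ∑_{k<t} x_k x_kᵀ` with `λ > 0`, then
`∑_{t<T} min{1, ‖x_t‖²_{V_t⁻¹}} ≤ 2 d log(1 + T L² / (d λ))`. -/
theorem elliptical_potential
    {d : ℕ} (hd : 0 < d) {lam L : ℝ} (hlam : 0 < lam) (hL : 0 < L)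
    (x : ℕ → Fin d → ℝ) (hx : ∀ t, Real.sqrt (x t ⬝ᵥ x t) ≤ L) (T : ℕ) :
    ∑ t ∈ Finset.range T,
        min 1 (x t ⬝ᵥ (designMatrix lam x t)⁻¹.mulVec (x t))
      ≤ 2 * d * Real.log (1 + T * L ^ 2 / (d * lam)) :=
  elliptical_potential_general hd hlam x hx T
end

section
/- Let (x_t)_{t≥1} be vectors in R^d with ‖x_t‖ ≤ L, and V_t = λI + Σ_{k=1}^{t−1} x_k x_kᵀ for λ > 0. Then the number of indices t ∈ {1, …, T} for which ‖x_t‖²_{V_t⁻¹} > 1 is at most (3d/log 2)·log(1 + L²/(λ log 2)). -/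
/-!
Let `s` be the set of large terms and `W = λI + ∑_{k ∈ s} x_k x_kᵀ`. Adding the terms of `s` in
increasing order, each one at least doubles `det W` by the matrix determinant lemma, because
`W` restricted to the earlier terms of `s` is dominated by the design matrix, whose inverse
quadratic form at `x_k` exceeds `1`. Hence `2^m λ^d ≤ det W`, while AM-GM on the eigenvalues
gives `det W ≤ (tr W / d)^d ≤ (λ + m L²/d)^d`. Taking logarithms, `y = m log 2 / d` satisfies
`y ≤ log (1 + c y)` with `c = L² / (λ log 2)`, and this forces `y ≤ 3 log (1 + c)`.
-/

open Matrix Finset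

theorem Real.prod_le_arith_mean_pow {ι : Type*} (s : Finset ι) {z : ι → ℝ}
    (hz : ∀ i ∈ s, 0 ≤ z i) : ∏ i ∈ s, z i ≤ ((∑ i ∈ s, z i) / #s) ^ #s := by
  rcases s.eq_empty_or_nonempty with rfl | hs
  · simp
  have hn : (0 : ℝ) < #s := by exact_mod_cast hs.card_pos
  have amgm := Real.geom_mean_le_arith_mean_weighted s (fun _ ↦ 1 / (#s : ℝ)) z
    (fun _ _ ↦ by positivity) (by simp [hn.ne']) hz
  calc ∏ i ∈ s, z i = (∏ i ∈ s, z i ^ (1 / (#s : ℝ))) ^ #s := by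
        rw [← Finset.prod_pow]
        refine Finset.prod_congr rfl fun i hi ↦ ?_
        rw [← Real.rpow_mul_natCast (hz i hi), one_div_mul_cancel hn.ne', Real.rpow_one]
    _ ≤ ((∑ i ∈ s, z i) / #s) ^ #s := by
        gcongr
        · exact Finset.prod_nonneg fun i hi ↦ Real.rpow_nonneg (hz i hi) _
        · rw [← Finset.mul_sum] at amgm
          simpa [div_eq_inv_mul] using amgm

theorem le_three_mul_log_one_add_of_le_log_one_add_mul {y c : ℝ} (hy : 0 ≤ y) (hc : 0 ≤ c)
    (h : y ≤ Real.log (1 + c * y)) : y ≤ 3 * Real.log (1 + c) := by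
  rcases hy.eq_or_lt with rfl | hy
  · have := Real.log_nonneg (by linarith : 1 ≤ 1 + c)
    linarith
  have hc : 1 ≤ c := by
    by_contra! hc
    have := Real.log_le_sub_one_of_pos (by positivity : 0 < 1 + c * y)
    nlinarith
  set C := Real.log (1 + c)
  have hC : 1 / 2 < C :=
    calc 1 / 2 < Real.log 2 := by linarith [Real.log_two_gt_d9]
      _ ≤ C := Real.log_le_log two_pos (by linarith)
  have hsplit : Real.log (1 + c * y) ≤ C + Real.log (1 + y) := by
    rw [← Real.log_mul (by positivity) (by positivity)]
    exact Real.log_le_log (by positivity) (by nlinarith)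
  by_contra! hy3
  -- `y > 3C > 3/2` is large enough for `exp (2y/3) > 1 + y`, contradicting `y - C ≤ log (1 + y)`.
  have hlog : Real.log (1 + y) < 2 / 3 * y := by
    rw [Real.log_lt_iff_lt_exp (by positivity)]
    calc 1 + y < 1 + 2 / 3 * y + (2 / 3 * y) ^ 2 / 2 := by nlinarith
      _ ≤ Real.exp (2 / 3 * y) := Real.quadratic_le_exp_of_nonneg (by positivity)
  linarith

namespace Matrix

theorem posSemidef_sum_vecMulVec_self {ι n : Type*} [Fintype n] (s : Finset ι) (x : ι → n → ℝ) :
    (∑ k ∈ s, vecMulVec (x k) (x k)).PosSemidef :=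
  posSemidef_sum s fun k _ ↦ by simpa using posSemidef_vecMulVec_self_star (x k)

variable {n : Type*} [Fintype n] [DecidableEq n]

theorem det_add_vecMulVec_s7 {α : Type*} [CommRing α] {A : Matrix n n α} (hA : IsUnit A.det)
    (u v : n → α) : (A + vecMulVec u v).det = A.det * (1 + v ⬝ᵥ A⁻¹ *ᵥ u) := by
  rw [vecMulVec_eq Unit, det_add_replicateCol_mul_replicateRow hA, det_unique (n := Unit),
    dotProduct_mulVec]
  rfl

theorem PosSemidef.det_le_trace_div_card_pow_s7 {A : Matrix n n ℝ} (hA : A.PosSemidef) :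
    A.det ≤ (A.trace / Fintype.card n) ^ Fintype.card n := by
  rw [hA.isHermitian.det_eq_prod_eigenvalues, hA.isHermitian.trace_eq_sum_eigenvalues]
  simpa using Real.prod_le_arith_mean_pow univ fun i _ ↦ hA.eigenvalues_nonneg i

theorem PosDef.dotProduct_inv_mulVec_anti {A B : Matrix n n ℝ} (hA : A.PosDef)
    (hAB : (B - A).PosSemidef) (v : n → ℝ) : v ⬝ᵥ B⁻¹ *ᵥ v ≤ v ⬝ᵥ A⁻¹ *ᵥ v := by
  have hB : B.PosDef := by simpa using hA.add_posSemidef hAB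
  set u := B⁻¹ *ᵥ v
  set w := A⁻¹ *ᵥ v
  have hAw : A *ᵥ w = v := by rw [mulVec_mulVec, mul_nonsing_inv _ hA.det_pos.ne'.isUnit, one_mulVec]
  have hBu : B *ᵥ u = v := by rw [mulVec_mulVec, mul_nonsing_inv _ hB.det_pos.ne'.isUnit, one_mulVec]
  have hsymm : w ⬝ᵥ A *ᵥ u = u ⬝ᵥ v := by
    rw [dotProduct_mulVec, ← mulVec_transpose, (isHermitian_iff_isSymm.1 hA.isHermitian).eq, hAw,
      dotProduct_comm]
  -- `0 ≤ (u - w)ᵀ A (u - w) ≤ wᵀ v - uᵀ v`, using `uᵀ A u ≤ uᵀ B u = uᵀ v`.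
  have hdiff := hAB.dotProduct_mulVec_nonneg u
  have hsq := hA.posSemidef.dotProduct_mulVec_nonneg (u - w)
  simp only [star_trivial, sub_mulVec, mulVec_sub, dotProduct_sub, sub_dotProduct, hAw, hBu,
    hsymm] at hdiff hsq
  rw [dotProduct_comm v u, dotProduct_comm v w]
  linarith

end Matrix

section RegularizedGram

variable {n : Type*} [DecidableEq n] {lam : ℝ} (x : ℕ → n → ℝ)

noncomputable def regularizedGram (lam : ℝ) (s : Finset ℕ) : Matrix n n ℝ :=
  lam • 1 + ∑ k ∈ s, vecMulVec (x k) (x k)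

theorem regularizedGram_insert {a : ℕ} {s : Finset ℕ} (ha : a ∉ s) :
    regularizedGram x lam (insert a s) = regularizedGram x lam s + vecMulVec (x a) (x a) := by
  rw [regularizedGram, regularizedGram, sum_insert ha]
  abel

variable [Fintype n]

theorem regularizedGram_posDef (hlam : 0 < lam) (s : Finset ℕ) :
    (regularizedGram x lam s).PosDef :=
  (PosDef.one.smul hlam).add_posSemidef (posSemidef_sum_vecMulVec_self s x)

theorem regularizedGram_sub_posSemidef {s t : Finset ℕ} (h : s ⊆ t) :
    (regularizedGram x lam t - regularizedGram x lam s).PosSemidef := by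
  rw [regularizedGram, regularizedGram, ← sum_sdiff h]
  simpa using posSemidef_sum_vecMulVec_self (t \ s) x

theorem trace_regularizedGram (s : Finset ℕ) :
    (regularizedGram x lam s).trace = Fintype.card n * lam + ∑ k ∈ s, x k ⬝ᵥ x k := by
  simp [regularizedGram, trace_sum, trace_vecMulVec, mul_comm]

theorem two_pow_card_mul_le_det_regularizedGram (hlam : 0 < lam) {s : Finset ℕ}
    (hs : ∀ a ∈ s, 1 < x a ⬝ᵥ (regularizedGram x lam (range a))⁻¹ *ᵥ x a) :
    2 ^ #s * lam ^ Fintype.card n ≤ (regularizedGram x lam s).det := by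
  induction s using Finset.induction_on_max with
  | empty => simp [regularizedGram]
  | insert a s hmax ih =>
    have ha : a ∉ s := fun h ↦ (hmax a h).false
    have hpos := regularizedGram_posDef x hlam s
    have hlarge : 1 < x a ⬝ᵥ (regularizedGram x lam s)⁻¹ *ᵥ x a :=
      (hs a (mem_insert_self a s)).trans_le <| hpos.dotProduct_inv_mulVec_anti
        (regularizedGram_sub_posSemidef x fun b hb ↦ mem_range.2 (hmax b hb)) (x a)
    have ih := ih fun b hb ↦ hs b (mem_insert_of_mem hb)
    rw [regularizedGram_insert x ha, det_add_vecMulVec_s7 hpos.det_pos.ne'.isUnit,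
      card_insert_of_notMem ha, pow_succ]
    nlinarith [hpos.det_pos]

theorem det_regularizedGram_le [Nonempty n] (hlam : 0 < lam) {s : Finset ℕ} {B : ℝ}
    (hB : ∀ k ∈ s, x k ⬝ᵥ x k ≤ B) :
    (regularizedGram x lam s).det ≤
      lam ^ Fintype.card n * (1 + #s * B / (Fintype.card n * lam)) ^ Fintype.card n := by
  have hn : (0 : ℝ) < Fintype.card n := by exact_mod_cast Fintype.card_pos
  have hsum : ∑ k ∈ s, x k ⬝ᵥ x k ≤ #s * B := by
    simpa using sum_le_sum hB
  refine ((regularizedGram_posDef x hlam s).posSemidef.det_le_trace_div_card_pow_s7).trans ?_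
  rw [← mul_pow, trace_regularizedGram]
  gcongr
  · have := sum_nonneg fun k (_ : k ∈ s) ↦ sum_nonneg fun i (_ : i ∈ univ) ↦ mul_self_nonneg (x k i)
    positivity
  · rw [div_le_iff₀ hn]
    field_simp
    linarith

end RegularizedGram

theorem count_large_elliptical_terms_general
    {d : ℕ} (hd : 0 < d) {lam L : ℝ} (hlam : 0 < lam)
    (x : ℕ → Fin d → ℝ) (hx : ∀ t, Real.sqrt (x t ⬝ᵥ x t) ≤ L) (T : ℕ) :
    (((Finset.range T).filter
        (fun t => 1 < x t ⬝ᵥ (designMatrix lam x t)⁻¹.mulVec (x t))).card : ℝ)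
      ≤ (3 * d / Real.log 2) * Real.log (1 + L ^ 2 / (lam * Real.log 2)) := by
  set s := (Finset.range T).filter (fun t => 1 < x t ⬝ᵥ (designMatrix lam x t)⁻¹.mulVec (x t))
  have hs : ∀ a ∈ s, 1 < x a ⬝ᵥ (regularizedGram x lam (range a))⁻¹ *ᵥ x a :=
    fun a ha ↦ (mem_filter.1 ha).2
  have : Nonempty (Fin d) := ⟨⟨0, hd⟩⟩
  have hd' : (0 : ℝ) < d := by exact_mod_cast hd
  have hdet : 2 ^ #s * lam ^ d ≤ lam ^ d * (1 + #s * L ^ 2 / (d * lam)) ^ d := by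
    simpa using (two_pow_card_mul_le_det_regularizedGram x hlam hs).trans
      (det_regularizedGram_le x hlam fun k _ ↦ (Real.sqrt_le_iff.1 (hx k)).2)
  rw [mul_comm, mul_le_mul_iff_of_pos_left (by positivity)] at hdet
  have hy : #s * Real.log 2 / d ≤
      Real.log (1 + L ^ 2 / (lam * Real.log 2) * (#s * Real.log 2 / d)) := by
    have := Real.log_le_log (by positivity) hdet
    rw [Real.log_pow, Real.log_pow] at this
    have hcy : L ^ 2 / (lam * Real.log 2) * (#s * Real.log 2 / d) = #s * L ^ 2 / (d * lam) := by
      field_simp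
    rwa [hcy, div_le_iff₀ hd', mul_comm _ (d : ℝ)]
  calc (#s : ℝ) = #s * Real.log 2 / d * d / Real.log 2 := by field_simp
    _ ≤ 3 * Real.log (1 + L ^ 2 / (lam * Real.log 2)) * d / Real.log 2 := by
      gcongr
      exact le_three_mul_log_one_add_of_le_log_one_add_mul (by positivity) (by positivity) hy
    _ = 3 * d / Real.log 2 * Real.log (1 + L ^ 2 / (lam * Real.log 2)) := by ring

/-- **Number of large elliptical potential terms.**
If `‖x_t‖ ≤ L` and `V_t = λI + ∑_{k<t} x_k x_kᵀ` with `λ > 0`, then the number of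
indices `t < T` with `‖x_t‖²_{V_t⁻¹} > 1` is at most
`(3d / log 2) · log(1 + L²/(λ log 2))`. -/
theorem count_large_elliptical_terms
    {d : ℕ} (hd : 0 < d) {lam L : ℝ} (hlam : 0 < lam) (hL : 0 < L)
    (x : ℕ → Fin d → ℝ) (hx : ∀ t, Real.sqrt (x t ⬝ᵥ x t) ≤ L) (T : ℕ) :
    (((Finset.range T).filter
        (fun t => 1 < x t ⬝ᵥ (designMatrix lam x t)⁻¹.mulVec (x t))).card : ℝ)
      ≤ (3 * d / Real.log 2) * Real.log (1 + L ^ 2 / (lam * Real.log 2)) :=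
  count_large_elliptical_terms_general hd hlam x hx T
end

section
/- Let (z_t)_{t≤T} be real-valued random variables adapted to a filtration (F_t) with 0 ≤ z_t ≤ B almost surely. Then with probability at least 1 − δ, Σ_{t=1}^T E[z_t | F_{t−1}] ≤ 2 Σ_{t=1}^T z_t + 8B log(2/δ). -/
/-!
Write `g_t = E[z_t | F_{t-1}]`. For `x ∈ [0, 1]`, `exp (-x) ≤ 1 - x / 2 ≤ exp (-x / 2)`, hence
`E[exp (-z_t / B) | F_{t-1}] ≤ exp (-g_t / (2B))`, so `M_n = exp (∑_{t ≤ n} (g_t / (2B) - z_t / B))`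
is a positive supermartingale with `M_0 = 1`. By Markov's inequality `M_T < 1/δ` with probability at
least `1 - δ`, and taking logarithms there gives `∑ g_t ≤ 2 ∑ z_t + 2B log (1/δ)`.
-/

open MeasureTheory Finset Real

lemma Real.exp_neg_le_one_sub_half {x : ℝ} (h0 : 0 ≤ x) (h1 : x ≤ 1) :
    exp (-x) ≤ 1 - x / 2 := by
  have hinv : exp (-x) * exp x = 1 := by rw [← exp_add, neg_add_cancel, exp_zero]
  nlinarith [add_one_le_exp x, exp_pos (-x)]

section CondExp

variable {Ω : Type*} {m m₀ : MeasurableSpace Ω} {μ : Measure Ω} [IsFiniteMeasure μ]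

lemma condExp_le_const_of_ae_le (hm : m ≤ m₀) {f : Ω → ℝ} (hf : Integrable f μ) {c : ℝ}
    (hfc : ∀ᵐ ω ∂μ, f ω ≤ c) : ∀ᵐ ω ∂μ, μ[f | m] ω ≤ c := by
  filter_upwards [condExp_mono (m := m) hf (integrable_const c) hfc] with ω hω
  rwa [condExp_const hm] at hω

lemma integrable_exp_neg_div {z : Ω → ℝ} (hz : AEMeasurable z μ) {B : ℝ} (hB : 0 ≤ B)
    (hz₀ : 0 ≤ᵐ[μ] z) : Integrable (fun ω => exp (-(z ω / B))) μ := by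
  refine .of_mem_Icc 0 1 (hz.div_const B).neg.exp ?_
  filter_upwards [hz₀] with ω hω
  exact ⟨(exp_pos _).le, exp_le_one_iff.2 (neg_nonpos.2 (div_nonneg hω hB))⟩

lemma condExp_exp_neg_div_le (hm : m ≤ m₀) {z : Ω → ℝ} (hz : AEMeasurable z μ) {B : ℝ}
    (hB : 0 < B) (hbound : ∀ᵐ ω ∂μ, z ω ∈ Set.Icc 0 B) :
    μ[fun ω => exp (-(z ω / B)) | m] ≤ᵐ[μ] fun ω => exp (-(μ[z | m] ω / (2 * B))) := by
  have hz_int : Integrable z μ := .of_mem_Icc 0 B hz hbound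
  have hexp_int := integrable_exp_neg_div hz hB.le (hbound.mono fun _ h => h.1)
  have haff_int : Integrable (fun ω => 1 - z ω / (2 * B)) μ :=
    (integrable_const 1).sub (hz_int.div_const _)
  have hchord : (fun ω => exp (-(z ω / B))) ≤ᵐ[μ] fun ω => 1 - z ω / (2 * B) := by
    filter_upwards [hbound] with ω hω
    have := exp_neg_le_one_sub_half (div_nonneg hω.1 hB.le) ((div_le_one hB).2 hω.2)
    rwa [div_div, mul_comm B] at this
  have haff : μ[fun ω => 1 - z ω / (2 * B) | m] =ᵐ[μ] fun ω => 1 - μ[z | m] ω / (2 * B) := by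
    have hfun : (fun ω => 1 - z ω / (2 * B)) = (fun _ => (1 : ℝ)) - (2 * B)⁻¹ • z := by
      funext ω; simp only [Pi.sub_apply, Pi.smul_apply, smul_eq_mul]; ring
    rw [hfun]
    filter_upwards [condExp_sub (integrable_const 1) (hz_int.smul (2 * B)⁻¹) m,
      condExp_smul (2 * B)⁻¹ z m] with ω h1 h2
    simp only [h1, h2, Pi.sub_apply, Pi.smul_apply, smul_eq_mul, condExp_const hm]
    ring
  filter_upwards [condExp_mono (m := m) hexp_int haff_int hchord, haff] with ω h1 h2
  rw [h2] at h1
  linarith [add_one_le_exp (-(μ[z | m] ω / (2 * B)))]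

end CondExp

section FreedmanProcess

variable {Ω : Type*} {m : MeasurableSpace Ω} (μ : Measure Ω) (F : Filtration ℕ m)
  (z : ℕ → Ω → ℝ) (B : ℝ)

noncomputable def freedmanProcess (n : ℕ) (ω : Ω) : ℝ :=
  exp (∑ t ∈ Icc 1 n, (μ[z t | F (t - 1)] ω / (2 * B) - z t ω / B))

lemma freedmanProcess_pos (n : ℕ) (ω : Ω) : 0 < freedmanProcess μ F z B n ω :=
  exp_pos _

lemma freedmanProcess_zero : freedmanProcess μ F z B 0 = 1 := by
  funext ω; simp [freedmanProcess]

lemma freedmanProcess_succ (n : ℕ) :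
    freedmanProcess μ F z B (n + 1) = freedmanProcess μ F z B n *
      (fun ω => exp (μ[z (n + 1) | F n] ω / (2 * B))) * fun ω => exp (-(z (n + 1) ω / B)) := by
  funext ω
  simp only [freedmanProcess, Pi.mul_apply, sum_Icc_succ_top (Nat.le_add_left 1 n),
    Nat.add_sub_cancel, exp_add, exp_sub, exp_neg, div_eq_mul_inv, mul_assoc]

variable {μ F z B}

lemma stronglyAdapted_freedmanProcess (hadapt : Adapted F z) :
    StronglyAdapted F (freedmanProcess μ F z B) := by
  refine Adapted.stronglyAdapted fun n => measurable_exp.comp (measurable_sum _ fun t ht => ?_)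
  have ht : t ≤ n := (mem_Icc.1 ht).2
  exact ((stronglyMeasurable_condExp.measurable.mono (F.mono (by omega)) le_rfl).div_const _).sub
    (((hadapt t).mono (F.mono ht) le_rfl).div_const _)

variable [IsFiniteMeasure μ]

lemma freedmanProcess_mem_Icc (hadapt : Adapted F z) (hB : 0 < B)
    (hbound : ∀ t, ∀ᵐ ω ∂μ, z t ω ∈ Set.Icc 0 B) (n : ℕ) :
    ∀ᵐ ω ∂μ, freedmanProcess μ F z B n ω ∈ Set.Icc 0 (exp (n / 2)) := by
  have hcond t : ∀ᵐ ω ∂μ, μ[z t | F (t - 1)] ω ≤ B :=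
    condExp_le_const_of_ae_le (F.le _) (.of_mem_Icc 0 B (hadapt.measurable (i := t)).aemeasurable
      (hbound t)) (by filter_upwards [hbound t] with ω hω using hω.2)
  filter_upwards [ae_all_iff.2 hbound, ae_all_iff.2 hcond] with ω hz hg
  refine ⟨(freedmanProcess_pos μ F z B n ω).le, exp_le_exp.2 ?_⟩
  calc ∑ t ∈ Icc 1 n, (μ[z t | F (t - 1)] ω / (2 * B) - z t ω / B)
      ≤ ∑ _t ∈ Icc 1 n, (1 / 2 : ℝ) := sum_le_sum fun t _ => by
        have : μ[z t | F (t - 1)] ω / (2 * B) ≤ 1 / 2 := by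
          rw [div_le_iff₀ (by positivity)]; linarith [hg t]
        linarith [div_nonneg (hz t).1 hB.le]
    _ = n / 2 := by simp [div_eq_mul_inv]

lemma integrable_freedmanProcess (hadapt : Adapted F z) (hB : 0 < B)
    (hbound : ∀ t, ∀ᵐ ω ∂μ, z t ω ∈ Set.Icc 0 B) (n : ℕ) :
    Integrable (freedmanProcess μ F z B n) μ :=
  .of_mem_Icc 0 _ ((stronglyAdapted_freedmanProcess hadapt n).measurable.mono (F.le n)
    le_rfl).aemeasurable (freedmanProcess_mem_Icc hadapt hB hbound n)

lemma supermartingale_freedmanProcess (hadapt : Adapted F z) (hB : 0 < B)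
    (hbound : ∀ t, ∀ᵐ ω ∂μ, z t ω ∈ Set.Icc 0 B) :
    Supermartingale (freedmanProcess μ F z B) F μ := by
  refine supermartingale_nat (stronglyAdapted_freedmanProcess hadapt)
    (integrable_freedmanProcess hadapt hB hbound) fun n => ?_
  have hz := hadapt.measurable (i := n + 1)
  have hpredictable : StronglyMeasurable[F n]
      (freedmanProcess μ F z B n * fun ω => exp (μ[z (n + 1) | F n] ω / (2 * B))) :=
    (stronglyAdapted_freedmanProcess hadapt n).mul
      (stronglyMeasurable_condExp.measurable.div_const _).exp.stronglyMeasurable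
  have hexp_int :=
    integrable_exp_neg_div hz.aemeasurable hB.le ((hbound (n + 1)).mono fun _ h => h.1)
  have hprod_int := integrable_freedmanProcess hadapt hB hbound (n + 1)
  rw [freedmanProcess_succ] at hprod_int ⊢
  filter_upwards [condExp_mul_of_stronglyMeasurable_left hpredictable hprod_int hexp_int,
    condExp_exp_neg_div_le (F.le n) hz.aemeasurable hB (hbound (n + 1))] with ω hpull hstep
  rw [hpull, Pi.mul_apply, Pi.mul_apply]
  calc freedmanProcess μ F z B n ω * exp (μ[z (n + 1) | F n] ω / (2 * B)) *
        μ[fun ω => exp (-(z (n + 1) ω / B)) | F n] ω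
      ≤ freedmanProcess μ F z B n ω * exp (μ[z (n + 1) | F n] ω / (2 * B)) *
        exp (-(μ[z (n + 1) | F n] ω / (2 * B))) := by
        gcongr
        exact mul_nonneg (freedmanProcess_pos μ F z B n ω).le (exp_pos _).le
    _ = freedmanProcess μ F z B n ω := by
        rw [mul_assoc, ← exp_add, add_neg_cancel, exp_zero, mul_one]

lemma integral_freedmanProcess_le_one [IsProbabilityMeasure μ] (hadapt : Adapted F z)
    (hB : 0 < B) (hbound : ∀ t, ∀ᵐ ω ∂μ, z t ω ∈ Set.Icc 0 B) (n : ℕ) :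
    ∫ ω, freedmanProcess μ F z B n ω ∂μ ≤ 1 := by
  have := (supermartingale_freedmanProcess hadapt hB hbound).setIntegral_le (Nat.zero_le n)
    MeasurableSet.univ
  simpa [freedmanProcess_zero] using this

end FreedmanProcess

lemma ofReal_one_sub_le_measure_lt_inv {Ω : Type*} {m : MeasurableSpace Ω} {μ : Measure Ω}
    [IsProbabilityMeasure μ] {f : Ω → ℝ} (hf₀ : 0 ≤ᵐ[μ] f) (hf : Integrable f μ)
    (hf₁ : ∫ ω, f ω ∂μ ≤ 1) {δ : ℝ} (hδ : 0 < δ) :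
    ENNReal.ofReal (1 - δ) ≤ μ {ω | f ω < δ⁻¹} := by
  have hmarkov : μ {ω | δ⁻¹ ≤ f ω} ≤ ENNReal.ofReal δ := by
    rw [← ENNReal.ofReal_toReal (measure_ne_top μ _)]
    refine ENNReal.ofReal_le_ofReal ?_
    have := (mul_meas_ge_le_integral_of_nonneg hf₀ hf δ⁻¹).trans hf₁
    rwa [inv_mul_le_iff₀ hδ, mul_one, measureReal_def] at this
  have hcover : (1 : ENNReal) ≤ μ {ω | f ω < δ⁻¹} + μ {ω | δ⁻¹ ≤ f ω} := by
    rw [← measure_univ (μ := μ)]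
    refine (measure_mono fun ω _ => ?_).trans (measure_union_le _ _)
    exact (lt_or_ge (f ω) δ⁻¹).imp id id
  rw [ENNReal.ofReal_sub _ hδ.le, ENNReal.ofReal_one, tsub_le_iff_right]
  exact hcover.trans (add_le_add_right hmarkov _)

lemma sum_le_two_mul_sum_add_of_exp_sum_lt {ι : Type*} (s : Finset ι) (a b : ι → ℝ) {B δ : ℝ}
    (hB : 0 < B) (hδ : δ ∈ Set.Ioc 0 1)
    (h : exp (∑ t ∈ s, (a t / (2 * B) - b t / B)) < δ⁻¹) :
    ∑ t ∈ s, a t ≤ 2 * ∑ t ∈ s, b t + 8 * B * log (2 / δ) := by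
  obtain ⟨hδ₀, hδ₁⟩ := hδ
  rw [← lt_log_iff_exp_lt (inv_pos.2 hδ₀), sum_sub_distrib, ← sum_div, ← sum_div,
    div_sub_div _ _ (by positivity) hB.ne', div_lt_iff₀ (by positivity)] at h
  have hlog : log δ⁻¹ ≤ log (2 / δ) :=
    log_le_log (inv_pos.2 hδ₀) (by rw [div_eq_mul_inv]; linarith [inv_pos.2 hδ₀])
  have hlog₀ : 0 ≤ log δ⁻¹ := log_nonneg ((one_le_inv₀ hδ₀).2 hδ₁)
  nlinarith [mul_le_mul_of_nonneg_left hlog hB.le, mul_nonneg hB.le hlog₀]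

/-- **Freedman's inequality** (Lemma 2 of Zhu et al., 2022).
Let `(z_t)_{t ≤ T}` be real-valued random variables adapted to a filtration `(F_t)`
with `0 ≤ z_t ≤ B` almost surely. Then with probability at least `1 - δ`,
`∑_{t=1}^T E[z_t | F_{t-1}] ≤ 2 ∑_{t=1}^T z_t + 8 B log(2/δ)`. -/
theorem freedman_inequality
    {Ω : Type*} {m : MeasurableSpace Ω} (μ : Measure Ω) [IsProbabilityMeasure μ]
    (F : Filtration ℕ m) (z : ℕ → Ω → ℝ) (hadapt : Adapted F z)
    {B : ℝ} (hB : 0 < B)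
    (hbound : ∀ t, ∀ᵐ ω ∂μ, 0 ≤ z t ω ∧ z t ω ≤ B)
    (T : ℕ) {δ : ℝ} (hδ : δ ∈ Set.Ioo (0:ℝ) 1) :
    ENNReal.ofReal (1 - δ)
      ≤ μ {ω | ∑ t ∈ Finset.Icc 1 T, (μ[z t | F (t - 1)]) ω
            ≤ 2 * ∑ t ∈ Finset.Icc 1 T, z t ω + 8 * B * Real.log (2 / δ)} := by
  have hMarkov := ofReal_one_sub_le_measure_lt_inv
    (ae_of_all _ fun ω => (freedmanProcess_pos μ F z B T ω).le)
    (integrable_freedmanProcess hadapt hB hbound T)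
    (integral_freedmanProcess_le_one hadapt hB hbound T) hδ.1
  refine hMarkov.trans (measure_mono fun ω hω => ?_)
  exact sum_le_two_mul_sum_add_of_exp_sum_lt _ _ _ hB (Set.Ioo_subset_Ioc_self hδ) hω
end

section
/- Let V, W be positive definite d×d matrices with V ⪯ W and det(W) ≤ (1+C) det(V) for some C > 0. Then for every x ∈ R^d, ‖x‖²_{V⁻¹} ≤ (1+C) ‖x‖²_{W⁻¹}. -/
/-! Conjugating by `√V` turns `V ≤ W` into `1 ≤ B := V^{-1/2} W V^{-1/2}`. Every eigenvalue
of `B` is at least `1`, hence at most the product of all of them, `det B = det W / det V`; so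
`W ≤ (det W / det V) • V`. Since inversion is antitone on positive definite matrices, this gives
`V⁻¹ ≤ (det W / det V) • W⁻¹`, and `det W / det V ≤ 1 + C`. -/

open Matrix
open scoped MatrixOrder ComplexOrder

namespace Matrix

variable {n : Type*} [Fintype n] [DecidableEq n]

theorem inv_le_inv_of_le {𝕜 : Type*} [RCLike 𝕜] {A B : Matrix n n 𝕜} (hA : A.PosDef)
    (hAB : A ≤ B) : B⁻¹ ≤ A⁻¹ := by
  have hB : B.PosDef := by simpa using hA.add_posSemidef hAB
  have hA_det : IsUnit A.det := hA.isUnit.map detMonoidHom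
  have hB_det : IsUnit B.det := hB.isUnit.map detMonoidHom
  have h_decomp :
      A⁻¹ - B⁻¹ = (A⁻¹ - B⁻¹) * A * (A⁻¹ - B⁻¹) + B⁻¹ * (B - A) * B⁻¹ := by
    simp only [mul_sub, sub_mul, Matrix.mul_assoc, mul_nonsing_inv _ hA_det,
      mul_nonsing_inv _ hB_det, nonsing_inv_mul_cancel_left _ _ hA_det, Matrix.mul_one]
    abel
  rw [← sub_nonneg, h_decomp]
  exact add_nonneg
    (IsSelfAdjoint.conjugate_nonneg hA.posSemidef.nonneg
      (hA.inv.isHermitian.sub hB.inv.isHermitian))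
    (IsSelfAdjoint.conjugate_nonneg (sub_nonneg.mpr hAB) hB.inv.isHermitian)

theorem le_det_smul_one_of_one_le {A : Matrix n n ℝ} (hA : 1 ≤ A) : A ≤ A.det • 1 := by
  have hA_sa : IsSelfAdjoint A := by
    simpa using (IsSelfAdjoint.of_nonneg (sub_nonneg.mpr hA)).add (IsSelfAdjoint.one _)
  have hA_herm : A.IsHermitian := hA_sa
  have h_one_le : ∀ i, 1 ≤ hA_herm.eigenvalues i := by
    have h_spec := (algebraMap_le_iff_le_spectrum (R := ℝ) (r := 1) hA_sa).mp (by simpa using hA)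
    exact fun i => h_spec _ (hA_herm.spectrum_real_eq_range_eigenvalues ▸ Set.mem_range_self i)
  rw [← Algebra.algebraMap_eq_smul_one, le_algebraMap_iff_spectrum_le hA_sa,
    hA_herm.spectrum_real_eq_range_eigenvalues, hA_herm.det_eq_prod_eigenvalues]
  rintro _ ⟨i, rfl⟩
  simpa using Multiset.mem_le_prod_of_one_le h_one_le (Finset.mem_univ_val i)

theorem le_det_div_det_smul_of_le {V W : Matrix n n ℝ} (hV : V.PosDef) (hVW : V ≤ W) :
    W ≤ (W.det / V.det) • V := by
  set S := CFC.sqrt V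
  have hS_herm : S.IsHermitian := (CFC.sqrt_nonneg V).posSemidef.isHermitian
  have hSS : S * S = V := CFC.sqrt_mul_sqrt_self V hV.posSemidef.nonneg
  have hS_det : IsUnit S.det :=
    (CFC.isUnit_sqrt_iff_isStrictlyPositive.mpr hV.isStrictlyPositive).map detMonoidHom
  set B := S⁻¹ * W * S⁻¹
  have hB : 1 ≤ B := by
    have hSVS : S⁻¹ * V * S⁻¹ = 1 := by
      rw [← hSS, nonsing_inv_mul_cancel_left _ _ hS_det, mul_nonsing_inv _ hS_det]
    have hS_inv_sa : IsSelfAdjoint S⁻¹ := hS_herm.inv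
    simpa only [hSVS] using hS_inv_sa.conjugate_le_conjugate hVW
  have hB_det : B.det = W.det / V.det := by
    rw [← hSS, det_mul, det_mul, det_mul, det_nonsing_inv, Ring.inverse_eq_inv]
    field_simp [hS_det.ne_zero]
  have hSBS : S * B * S = W := by
    simp only [B, Matrix.mul_assoc, nonsing_inv_mul _ hS_det, Matrix.mul_one,
      mul_nonsing_inv_cancel_left _ _ hS_det]
  calc W = S * B * S := hSBS.symm
    _ ≤ S * (B.det • 1) * S :=
      hS_herm.isSelfAdjoint.conjugate_le_conjugate (le_det_smul_one_of_one_le hB)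
    _ = (W.det / V.det) • V := by
      rw [hB_det, Matrix.mul_smul, Matrix.mul_one, Matrix.smul_mul, hSS]

theorem inv_le_det_div_det_smul_inv_of_le {V W : Matrix n n ℝ} (hV : V.PosDef) (hW : W.PosDef)
    (hVW : V ≤ W) : V⁻¹ ≤ (W.det / V.det) • W⁻¹ := by
  have ht : 0 < W.det / V.det := div_pos hW.det_pos hV.det_pos
  have h := smul_le_smul_of_nonneg_left (inv_le_inv_of_le hW (le_det_div_det_smul_of_le hV hVW))
    ht.le
  let := invertibleOfNonzero ht.ne'
  rwa [inv_smul V _ (hV.isUnit.map detMonoidHom), smul_smul, mul_invOf_self, one_smul] at h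

end Matrix

theorem inv_quadform_le_of_det_ratio_general
    {d : ℕ} (V W : Matrix (Fin d) (Fin d) ℝ)
    (hV : V.PosDef) (hW : W.PosDef) (hVW : (W - V).PosSemidef)
    {C : ℝ} (hdet : W.det ≤ (1 + C) * V.det) (x : Fin d → ℝ) :
    x ⬝ᵥ V⁻¹.mulVec x ≤ (1 + C) * (x ⬝ᵥ W⁻¹.mulVec x) := by
  have h_inv := (le_iff.mp (inv_le_det_div_det_smul_inv_of_le hV hW hVW)).dotProduct_mulVec_nonneg x
  have h_ratio : W.det / V.det ≤ 1 + C := (div_le_iff₀ hV.det_pos).mpr hdet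
  have h_W_inv : 0 ≤ x ⬝ᵥ W⁻¹ *ᵥ x := by
    simpa using hW.inv.posSemidef.dotProduct_mulVec_nonneg x
  simp only [star_trivial, sub_mulVec, smul_mulVec, dotProduct_sub, dotProduct_smul, smul_eq_mul,
    sub_nonneg] at h_inv
  calc x ⬝ᵥ V⁻¹ *ᵥ x ≤ W.det / V.det * (x ⬝ᵥ W⁻¹ *ᵥ x) := h_inv
    _ ≤ (1 + C) * (x ⬝ᵥ W⁻¹ *ᵥ x) := by gcongr

/-- **Lazy design matrix comparison.** If `V ⪯ W` are positive definite with
`det W ≤ (1+C) det V` for some `C > 0`, then for every `x`,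
`‖x‖²_{V⁻¹} ≤ (1+C) ‖x‖²_{W⁻¹}`. -/
theorem inv_quadform_le_of_det_ratio
    {d : ℕ} (V W : Matrix (Fin d) (Fin d) ℝ)
    (hV : V.PosDef) (hW : W.PosDef) (hVW : (W - V).PosSemidef)
    {C : ℝ} (hC : 0 < C) (hdet : W.det ≤ (1 + C) * V.det) (x : Fin d → ℝ) :
    x ⬝ᵥ V⁻¹.mulVec x ≤ (1 + C) * (x ⬝ᵥ W⁻¹.mulVec x) :=
  inv_quadform_le_of_det_ratio_general V W hV hW hVW hdet x
end
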